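/- arXiv:math/0702647 — 2 statements merged into one kernel-verified Lean document; each statement's English description precedes it below -/
import Mathlib

section
/- Let $M = (0,1)^2$ with periodic boundary conditions, and let $\widetilde{v}: M\times(0,1)\to\mathbb{R}^2$ be smooth with horizontal periodicity. Then for $r \ge 2$ there is a constant $C$ such that $\left(\int_M\left(\int_0^1|\widetilde{v}|^r\,dz\right)^2 dxdy\right)^{1/2} \le C\|\widetilde{v}\|_{L^r(\Omega)}^{r/2}\left(\int_\Omega |\widetilde{v}|^{r-2}|\nabla_h\widetilde{v}|^2\,dxdydz\right)^{1/2} + \|\widetilde{v}\|_{L^r(\Omega)}^r$, where $\Omega = M\times(0,1)$. -/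
open MeasureTheory Set

/-- Partial derivative in the `x`-direction. -/
noncomputable def pdX (f : ℝ × ℝ × ℝ → ℝ) (q : ℝ × ℝ × ℝ) : ℝ := fderiv ℝ f q (1, 0, 0)

/-- Partial derivative in the `y`-direction. -/
noncomputable def pdY (f : ℝ × ℝ × ℝ → ℝ) (q : ℝ × ℝ × ℝ) : ℝ := fderiv ℝ f q (0, 1, 0)



lemma intOn (f : ℝ → ℝ) (hf : Continuous f) : IntegrableOn f (Ioo (0:ℝ) 1) :=
  (hf.integrableOn_Icc).mono_set Ioo_subset_Icc_self

lemma cs (μ : Measure ℝ) (f g : ℝ → ℝ) (hf : 0 ≤ f) (hg : 0 ≤ g)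
    (hf2 : Integrable (fun t => f t ^ 2) μ) (hg2 : Integrable (fun t => g t ^ 2) μ)
    (hfg : Integrable (fun t => f t * g t) μ) :
    ∫ t, f t * g t ∂μ ≤ Real.sqrt (∫ t, f t ^ 2 ∂μ) * Real.sqrt (∫ t, g t ^ 2 ∂μ) := by
  set A := ∫ t, f t ^ 2 ∂μ with hA
  set B := ∫ t, g t ^ 2 ∂μ with hB
  have hA0 : 0 ≤ A := integral_nonneg fun t => sq_nonneg _
  have hB0 : 0 ≤ B := integral_nonneg fun t => sq_nonneg _
  rcases eq_or_lt_of_le hA0 with h | hApos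
  · have : (fun t => f t ^ 2) =ᵐ[μ] 0 := by
      rw [← integral_eq_zero_iff_of_nonneg (fun t => sq_nonneg _) hf2]
      exact h.symm
    have hz : (fun t => f t * g t) =ᵐ[μ] 0 := by
      filter_upwards [this] with t ht
      have h0 : f t = 0 := by
        simp only [Pi.zero_apply] at ht
        nlinarith [sq_nonneg (f t)]
      simp [h0]
    have hz0 : ∫ t, f t * g t ∂μ = 0 := by simpa using integral_congr_ae hz
    rw [hz0]; positivity
  rcases eq_or_lt_of_le hB0 with h | hBpos
  · have : (fun t => g t ^ 2) =ᵐ[μ] 0 := by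
      rw [← integral_eq_zero_iff_of_nonneg (fun t => sq_nonneg _) hg2]
      exact h.symm
    have hz : (fun t => f t * g t) =ᵐ[μ] 0 := by
      filter_upwards [this] with t ht
      have h0 : g t = 0 := by
        simp only [Pi.zero_apply] at ht
        nlinarith [sq_nonneg (g t)]
      simp [h0]
    have hz0 : ∫ t, f t * g t ∂μ = 0 := by simpa using integral_congr_ae hz
    rw [hz0]; positivity
  · have key : 0 ≤ ∫ t, (Real.sqrt B * f t - Real.sqrt A * g t) ^ 2 ∂μ :=
      integral_nonneg fun t => sq_nonneg _
    have h1 : Real.sqrt B * Real.sqrt B = B := Real.mul_self_sqrt hB0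
    have h2 : Real.sqrt A * Real.sqrt A = A := Real.mul_self_sqrt hA0
    have expand : ∫ t, (Real.sqrt B * f t - Real.sqrt A * g t) ^ 2 ∂μ
        = B * A - 2 * (Real.sqrt A * Real.sqrt B) * ∫ t, f t * g t ∂μ + A * B := by
      have heq : (fun t => (Real.sqrt B * f t - Real.sqrt A * g t) ^ 2)
          = fun t => (B * f t ^ 2 - (2 * (Real.sqrt A * Real.sqrt B)) * (f t * g t))
              + A * g t ^ 2 := by
        funext t
        linear_combination (f t ^ 2) * h1 + (g t ^ 2) * h2
      have i1 : Integrable (fun t => B * f t ^ 2 - 2 * (Real.sqrt A * Real.sqrt B) * (f t * g t)) μ :=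
        (hf2.const_mul _).sub (hfg.const_mul _)
      have i2 : Integrable (fun t => A * g t ^ 2) μ := hg2.const_mul _
      rw [heq, integral_add i1 i2,
        integral_sub (hf2.const_mul _) (hfg.const_mul _), integral_const_mul,
        integral_const_mul, integral_const_mul]
    have hABpos : 0 < Real.sqrt A * Real.sqrt B := by
      have := Real.sqrt_pos.mpr hApos
      have := Real.sqrt_pos.mpr hBpos
      positivity
    nlinarith [key, expand]


lemma contParamX {X : Type*} [TopologicalSpace X] [FirstCountableTopology X]
    [LocallyCompactSpace X]
    (F : X → ℝ → ℝ) (hF : Continuous (Function.uncurry F)) :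
    Continuous (fun x => ∫ y in Ioo (0:ℝ) 1, F x y) := by
  have h : (fun x => ∫ y in Ioo (0:ℝ) 1, F x y) = fun x => ∫ y in Icc (0:ℝ) 1, F x y :=
    funext fun x => integral_Icc_eq_integral_Ioo.symm
  rw [h]
  exact continuous_parametric_integral_of_continuous hF isCompact_Icc

lemma swapInt (F : ℝ → ℝ → ℝ) (hF : Continuous (Function.uncurry F)) :
    ∫ a in Ioo (0:ℝ) 1, ∫ b in Ioo (0:ℝ) 1, F a b
      = ∫ b in Ioo (0:ℝ) 1, ∫ a in Ioo (0:ℝ) 1, F a b := by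
  apply MeasureTheory.integral_integral_swap
  rw [Measure.prod_restrict, ← Measure.volume_eq_prod]
  exact ((hF.continuousOn).integrableOn_compact
    (isCompact_Icc.prod isCompact_Icc)).mono_set
    (prod_mono Ioo_subset_Icc_self Ioo_subset_Icc_self)

lemma contRpow {X : Type*} [TopologicalSpace X] (p : ℝ) (hp : 0 ≤ p) (u : X → ℝ)
    (hu : Continuous u) : Continuous (fun q => u q ^ p) := by
  rcases eq_or_lt_of_le hp with h | h
  · have : (fun q => u q ^ p) = fun _ => (1:ℝ) := funext fun q => by
      rw [← h, Real.rpow_zero]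
    rw [this]; exact continuous_const
  · have hc : Continuous fun s : ℝ => s ^ p := by
      rw [continuous_iff_continuousAt]; intro s
      rcases eq_or_ne s 0 with rfl | hs
      · exact Real.continuousAt_rpow_const 0 p (Or.inr h.le)
      · exact Real.continuousAt_rpow_const s p (Or.inl hs)
    exact hc.comp hu

-- continuity of z-parametric integral
lemma contIntZ (f : ℝ × ℝ × ℝ → ℝ) (hf : Continuous f) :
    Continuous (fun p : ℝ × ℝ => ∫ z in Ioo (0:ℝ) 1, f (p.1, p.2, z)) :=
  contParamX (fun (p : ℝ × ℝ) z => f (p.1, p.2, z)) (by fun_prop)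

lemma contIntYZ (f : ℝ × ℝ × ℝ → ℝ) (hf : Continuous f) :
    Continuous (fun x : ℝ => ∫ y in Ioo (0:ℝ) 1, ∫ z in Ioo (0:ℝ) 1, f (x, y, z)) :=
  contParamX (fun x y => ∫ z in Ioo (0:ℝ) 1, f (x, y, z))
    (by
      have := contIntZ f hf
      fun_prop)

lemma contIntZsec (f : ℝ × ℝ × ℝ → ℝ) (hf : Continuous f) (x : ℝ) :
    Continuous fun y : ℝ => ∫ z in Ioo (0:ℝ) 1, f (x, y, z) := by
  have h := contIntZ f hf
  exact h.comp (by fun_prop : Continuous fun y : ℝ => ((x, y) : ℝ × ℝ))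

section I3
-- triple integral helpers

lemma i3_nonneg (f : ℝ × ℝ × ℝ → ℝ) (hf : ∀ q, 0 ≤ f q) :
    0 ≤ ∫ x in Ioo (0:ℝ) 1, ∫ y in Ioo (0:ℝ) 1, ∫ z in Ioo (0:ℝ) 1, f (x, y, z) :=
  integral_nonneg fun _ => integral_nonneg fun _ => integral_nonneg fun _ => hf _

lemma i3_mono (f g : ℝ × ℝ × ℝ → ℝ) (hf : Continuous f) (hg : Continuous g)
    (hle : ∀ q, f q ≤ g q) :
    (∫ x in Ioo (0:ℝ) 1, ∫ y in Ioo (0:ℝ) 1, ∫ z in Ioo (0:ℝ) 1, f (x, y, z)) ≤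
      ∫ x in Ioo (0:ℝ) 1, ∫ y in Ioo (0:ℝ) 1, ∫ z in Ioo (0:ℝ) 1, g (x, y, z) := by
  apply integral_mono (intOn _ (contIntYZ f hf)) (intOn _ (contIntYZ g hg))
  intro x
  apply integral_mono (intOn _ (contIntZsec f hf x)) (intOn _ (contIntZsec g hg x))
  intro y
  exact integral_mono (intOn _ (by fun_prop)) (intOn _ (by fun_prop)) fun z => hle _

lemma i3_add (f g : ℝ × ℝ × ℝ → ℝ) (hf : Continuous f) (hg : Continuous g) :
    (∫ x in Ioo (0:ℝ) 1, ∫ y in Ioo (0:ℝ) 1, ∫ z in Ioo (0:ℝ) 1, (f (x, y, z) + g (x, y, z)))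
      = (∫ x in Ioo (0:ℝ) 1, ∫ y in Ioo (0:ℝ) 1, ∫ z in Ioo (0:ℝ) 1, f (x, y, z))
        + ∫ x in Ioo (0:ℝ) 1, ∫ y in Ioo (0:ℝ) 1, ∫ z in Ioo (0:ℝ) 1, g (x, y, z) := by
  have h1 : ∀ x y : ℝ, (∫ z in Ioo (0:ℝ) 1, (f (x, y, z) + g (x, y, z)))
      = (∫ z in Ioo (0:ℝ) 1, f (x, y, z)) + ∫ z in Ioo (0:ℝ) 1, g (x, y, z) := fun x y =>
    integral_add (intOn _ (by fun_prop)) (intOn _ (by fun_prop))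
  have h2 : ∀ x : ℝ, (∫ y in Ioo (0:ℝ) 1, ∫ z in Ioo (0:ℝ) 1, (f (x, y, z) + g (x, y, z)))
      = (∫ y in Ioo (0:ℝ) 1, ∫ z in Ioo (0:ℝ) 1, f (x, y, z))
        + ∫ y in Ioo (0:ℝ) 1, ∫ z in Ioo (0:ℝ) 1, g (x, y, z) := by
    intro x
    rw [show (fun y => ∫ z in Ioo (0:ℝ) 1, (f (x, y, z) + g (x, y, z)))
        = fun y => (∫ z in Ioo (0:ℝ) 1, f (x, y, z)) + ∫ z in Ioo (0:ℝ) 1, g (x, y, z)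
      from funext fun y => h1 x y]
    exact integral_add (intOn _ (contIntZsec f hf x)) (intOn _ (contIntZsec g hg x))
  rw [show (fun x => ∫ y in Ioo (0:ℝ) 1, ∫ z in Ioo (0:ℝ) 1, (f (x, y, z) + g (x, y, z)))
      = fun x => (∫ y in Ioo (0:ℝ) 1, ∫ z in Ioo (0:ℝ) 1, f (x, y, z))
        + ∫ y in Ioo (0:ℝ) 1, ∫ z in Ioo (0:ℝ) 1, g (x, y, z) from funext h2]
  exact integral_add (intOn _ (contIntYZ f hf)) (intOn _ (contIntYZ g hg))

-- Cauchy–Schwarz for triple integrals of nonneg continuous functions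
lemma cs3 (a b : ℝ × ℝ × ℝ → ℝ) (ha : Continuous a) (hb : Continuous b)
    (ha0 : ∀ q, 0 ≤ a q) (hb0 : ∀ q, 0 ≤ b q) :
    (∫ x in Ioo (0:ℝ) 1, ∫ y in Ioo (0:ℝ) 1, ∫ z in Ioo (0:ℝ) 1, a (x, y, z) * b (x, y, z)) ≤
      Real.sqrt (∫ x in Ioo (0:ℝ) 1, ∫ y in Ioo (0:ℝ) 1, ∫ z in Ioo (0:ℝ) 1, a (x, y, z) ^ 2) *
      Real.sqrt (∫ x in Ioo (0:ℝ) 1, ∫ y in Ioo (0:ℝ) 1, ∫ z in Ioo (0:ℝ) 1, b (x, y, z) ^ 2) := by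
  set A2 : ℝ × ℝ → ℝ := fun p => ∫ z in Ioo (0:ℝ) 1, a (p.1, p.2, z) ^ 2 with hA2
  set B2 : ℝ × ℝ → ℝ := fun p => ∫ z in Ioo (0:ℝ) 1, b (p.1, p.2, z) ^ 2 with hB2
  have hA2c : Continuous A2 := contIntZ (fun q => a q ^ 2) (by fun_prop)
  have hB2c : Continuous B2 := contIntZ (fun q => b q ^ 2) (by fun_prop)
  have hA20 : ∀ p, 0 ≤ A2 p := fun p => integral_nonneg fun z => sq_nonneg _
  have hB20 : ∀ p, 0 ≤ B2 p := fun p => integral_nonneg fun z => sq_nonneg _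
  -- z-level
  have hz : ∀ x y : ℝ, (∫ z in Ioo (0:ℝ) 1, a (x, y, z) * b (x, y, z))
      ≤ Real.sqrt (A2 (x, y)) * Real.sqrt (B2 (x, y)) := by
    intro x y
    exact cs _ _ _ (fun z => ha0 _) (fun z => hb0 _)
      (intOn _ (by fun_prop)) (intOn _ (by fun_prop)) (intOn _ (by fun_prop))
  -- y-level, fixed x
  have hy : ∀ x : ℝ, (∫ y in Ioo (0:ℝ) 1, ∫ z in Ioo (0:ℝ) 1, a (x, y, z) * b (x, y, z))
      ≤ Real.sqrt (∫ y in Ioo (0:ℝ) 1, A2 (x, y)) * Real.sqrt (∫ y in Ioo (0:ℝ) 1, B2 (x, y)) := by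
    intro x
    have step1 : (∫ y in Ioo (0:ℝ) 1, ∫ z in Ioo (0:ℝ) 1, a (x, y, z) * b (x, y, z))
        ≤ ∫ y in Ioo (0:ℝ) 1, Real.sqrt (A2 (x, y)) * Real.sqrt (B2 (x, y)) := by
      apply integral_mono
        (intOn (fun y => ∫ z in Ioo (0:ℝ) 1, a (x, y, z) * b (x, y, z))
          (contIntZsec (fun q => a q * b q) (by fun_prop) x))
        (intOn (fun y => Real.sqrt (A2 (x, y)) * Real.sqrt (B2 (x, y))) (by fun_prop))
      exact fun y => hz x y
    have step2 : (∫ y in Ioo (0:ℝ) 1, Real.sqrt (A2 (x, y)) * Real.sqrt (B2 (x, y)))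
        ≤ Real.sqrt (∫ y in Ioo (0:ℝ) 1, A2 (x, y)) * Real.sqrt (∫ y in Ioo (0:ℝ) 1, B2 (x, y)) := by
      have e1 : (fun y => Real.sqrt (A2 (x, y)) ^ 2) = fun y => A2 (x, y) :=
        funext fun y => Real.sq_sqrt (hA20 _)
      have e2 : (fun y => Real.sqrt (B2 (x, y)) ^ 2) = fun y => B2 (x, y) :=
        funext fun y => Real.sq_sqrt (hB20 _)
      have := cs (volume.restrict (Ioo (0:ℝ) 1)) (fun y => Real.sqrt (A2 (x, y)))
        (fun y => Real.sqrt (B2 (x, y))) (fun y => Real.sqrt_nonneg _)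
        (fun y => Real.sqrt_nonneg _)
        (by rw [show (fun y => Real.sqrt (A2 (x, y)) ^ 2) = fun y => A2 (x, y) from e1]
            exact intOn _ (contIntZsec (fun q => a q ^ 2) (by fun_prop) x))
        (by rw [show (fun y => Real.sqrt (B2 (x, y)) ^ 2) = fun y => B2 (x, y) from e2]
            exact intOn _ (contIntZsec (fun q => b q ^ 2) (by fun_prop) x))
        (intOn _ (by fun_prop))
      calc (∫ y in Ioo (0:ℝ) 1, Real.sqrt (A2 (x, y)) * Real.sqrt (B2 (x, y)))
          ≤ Real.sqrt (∫ y in Ioo (0:ℝ) 1, Real.sqrt (A2 (x, y)) ^ 2)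
            * Real.sqrt (∫ y in Ioo (0:ℝ) 1, Real.sqrt (B2 (x, y)) ^ 2) := this
        _ = _ := by rw [integral_congr_ae (Filter.Eventually.of_forall fun y => Real.sq_sqrt (hA20 _)),
              integral_congr_ae (Filter.Eventually.of_forall fun y => Real.sq_sqrt (hB20 _))]
    exact step1.trans step2
  -- x-level
  set AY : ℝ → ℝ := fun x => ∫ y in Ioo (0:ℝ) 1, A2 (x, y) with hAY
  set BY : ℝ → ℝ := fun x => ∫ y in Ioo (0:ℝ) 1, B2 (x, y) with hBY
  have hAYc : Continuous AY := contIntYZ _ (by fun_prop : Continuous fun q : ℝ × ℝ × ℝ => a q ^ 2)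
  have hBYc : Continuous BY := contIntYZ _ (by fun_prop : Continuous fun q : ℝ × ℝ × ℝ => b q ^ 2)
  have hAY0 : ∀ x, 0 ≤ AY x := fun x => integral_nonneg fun y => hA20 _
  have hBY0 : ∀ x, 0 ≤ BY x := fun x => integral_nonneg fun y => hB20 _
  have step1 : (∫ x in Ioo (0:ℝ) 1, ∫ y in Ioo (0:ℝ) 1, ∫ z in Ioo (0:ℝ) 1,
        a (x, y, z) * b (x, y, z))
      ≤ ∫ x in Ioo (0:ℝ) 1, Real.sqrt (AY x) * Real.sqrt (BY x) := by
    apply integral_mono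
      (intOn (fun x => ∫ y in Ioo (0:ℝ) 1, ∫ z in Ioo (0:ℝ) 1, a (x, y, z) * b (x, y, z))
        (contIntYZ (fun q => a q * b q) (by fun_prop)))
      (intOn (fun x => Real.sqrt (AY x) * Real.sqrt (BY x)) (by fun_prop))
    exact hy
  have step2 : (∫ x in Ioo (0:ℝ) 1, Real.sqrt (AY x) * Real.sqrt (BY x))
      ≤ Real.sqrt (∫ x in Ioo (0:ℝ) 1, AY x) * Real.sqrt (∫ x in Ioo (0:ℝ) 1, BY x) := by
    have := cs (volume.restrict (Ioo (0:ℝ) 1)) (fun x => Real.sqrt (AY x))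
      (fun x => Real.sqrt (BY x)) (fun x => Real.sqrt_nonneg _) (fun x => Real.sqrt_nonneg _)
      (by rw [show (fun x => Real.sqrt (AY x) ^ 2) = AY from funext fun x => Real.sq_sqrt (hAY0 _)]
          exact intOn _ hAYc)
      (by rw [show (fun x => Real.sqrt (BY x) ^ 2) = BY from funext fun x => Real.sq_sqrt (hBY0 _)]
          exact intOn _ hBYc)
      (intOn _ (by fun_prop))
    calc (∫ x in Ioo (0:ℝ) 1, Real.sqrt (AY x) * Real.sqrt (BY x))
        ≤ Real.sqrt (∫ x in Ioo (0:ℝ) 1, Real.sqrt (AY x) ^ 2)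
          * Real.sqrt (∫ x in Ioo (0:ℝ) 1, Real.sqrt (BY x) ^ 2) := this
      _ = _ := by rw [integral_congr_ae (Filter.Eventually.of_forall fun x => Real.sq_sqrt (hAY0 _)),
            integral_congr_ae (Filter.Eventually.of_forall fun x => Real.sq_sqrt (hBY0 _))]
  exact (step1.trans step2)

end I3

lemma oned (f f' : ℝ → ℝ) (hder : ∀ x, HasDerivAt f (f' x) x) (hc : Continuous f')
    (hper : Function.Periodic f 1) (x : ℝ) :
    f x ≤ (∫ t in Ioo (0:ℝ) 1, f t) + ∫ t in Ioo (0:ℝ) 1, |f' t| := by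
  have hfc : Continuous f := by
    rw [continuous_iff_continuousAt]; exact fun x => (hder x).continuousAt
  obtain ⟨x₀, hx₀mem, hmin⟩ :=
    isCompact_Icc.exists_isMinOn (nonempty_Icc.mpr zero_le_one) hfc.continuousOn
  have h1 : f x₀ ≤ ∫ t in Ioo (0:ℝ) 1, f t := by
    have : ∫ _ in Ioo (0:ℝ) 1, f x₀ ≤ ∫ t in Ioo (0:ℝ) 1, f t := by
      apply setIntegral_mono_on (integrableOn_const (by simp))
        ((hfc.integrableOn_Icc).mono_set Ioo_subset_Icc_self) measurableSet_Ioo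
      exact fun t ht => hmin (Ioo_subset_Icc_self ht)
    simpa using this
  have hper' : Function.Periodic f' 1 := by
    intro t
    have g1 : HasDerivAt (fun s => f (s + 1)) (f' (t + 1)) t := by
      simpa [Function.comp_def] using (hder (t + 1)).comp t ((hasDerivAt_id t).add_const 1)
    have g2 : (fun s => f (s + 1)) = f := funext fun s => hper s
    rw [g2] at g1
    exact g1.unique (hder t)
  have habs : Function.Periodic (fun t => |f' t|) 1 := fun t => by simp [hper' t]
  set n : ℤ := ⌊x - x₀⌋ with hn
  set x' : ℝ := x - n • (1:ℝ) with hx'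
  have hfx : f x' = f x := hper.sub_zsmul_eq n
  have hx'1 : x₀ ≤ x' := by
    have := Int.floor_le (x - x₀)
    simp only [hx', zsmul_eq_mul, mul_one]
    linarith
  have hx'2 : x' ≤ x₀ + 1 := by
    have := Int.lt_floor_add_one (x - x₀)
    simp only [hx', zsmul_eq_mul, mul_one]
    linarith
  have hftc : f x' - f x₀ = ∫ t in x₀..x', f' t :=
    (intervalIntegral.integral_eq_sub_of_hasDerivAt (fun t _ => hder t)
      (hc.intervalIntegrable _ _)).symm
  have hb1 : ∫ t in x₀..x', f' t ≤ ∫ t in x₀..x', |f' t| := by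
    calc ∫ t in x₀..x', f' t ≤ |∫ t in x₀..x', f' t| := le_abs_self _
    _ ≤ ∫ t in x₀..x', |f' t| := intervalIntegral.abs_integral_le_integral_abs hx'1
  have hb2 : ∫ t in x₀..x', |f' t| ≤ ∫ t in x₀..x₀ + 1, |f' t| := by
    apply intervalIntegral.integral_mono_interval le_rfl hx'1 hx'2
    · exact Filter.Eventually.of_forall fun t => abs_nonneg _
    · exact (hc.abs.intervalIntegrable _ _)
  have hb3 : ∫ t in x₀..x₀ + 1, |f' t| = ∫ t in Ioo (0:ℝ) 1, |f' t| := by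
    rw [habs.intervalIntegral_add_eq x₀ 0, zero_add,
      intervalIntegral.integral_of_le zero_le_one, integral_Ioc_eq_integral_Ioo]
  have : f x = f x₀ + ∫ t in x₀..x', f' t := by rw [← hftc, ← hfx]; ring
  linarith

lemma key (w dx dy : ℝ × ℝ × ℝ → ℝ) (hw : Continuous w) (hdx : Continuous dx)
    (hdy : Continuous dy) (hw0 : ∀ q, 0 ≤ w q)
    (hderx : ∀ x y z : ℝ, HasDerivAt (fun t => w (t, y, z)) (dx (x, y, z)) x)
    (hdery : ∀ x y z : ℝ, HasDerivAt (fun t => w (x, t, z)) (dy (x, y, z)) y)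
    (hperx : ∀ x y z : ℝ, w (x + 1, y, z) = w (x, y, z))
    (hpery : ∀ x y z : ℝ, w (x, y + 1, z) = w (x, y, z)) :
    (∫ x in Ioo (0:ℝ) 1, ∫ y in Ioo (0:ℝ) 1, (∫ z in Ioo (0:ℝ) 1, w (x, y, z)) ^ 2)
      ≤ ((∫ x in Ioo (0:ℝ) 1, ∫ y in Ioo (0:ℝ) 1, ∫ z in Ioo (0:ℝ) 1, w (x, y, z))
          + (∫ x in Ioo (0:ℝ) 1, ∫ y in Ioo (0:ℝ) 1, ∫ z in Ioo (0:ℝ) 1, |dx (x, y, z)|)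
          + (∫ x in Ioo (0:ℝ) 1, ∫ y in Ioo (0:ℝ) 1, ∫ z in Ioo (0:ℝ) 1, |dy (x, y, z)|)) ^ 2 := by
  set I := ∫ x in Ioo (0:ℝ) 1, ∫ y in Ioo (0:ℝ) 1, ∫ z in Ioo (0:ℝ) 1, w (x, y, z) with hI
  set Nx := ∫ x in Ioo (0:ℝ) 1, ∫ y in Ioo (0:ℝ) 1, ∫ z in Ioo (0:ℝ) 1, |dx (x, y, z)| with hNx
  set Ny := ∫ x in Ioo (0:ℝ) 1, ∫ y in Ioo (0:ℝ) 1, ∫ z in Ioo (0:ℝ) 1, |dy (x, y, z)| with hNy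
  set P : ℝ → ℝ := fun y => ∫ x in Ioo (0:ℝ) 1, ∫ z in Ioo (0:ℝ) 1,
    (w (x, y, z) + |dx (x, y, z)|) with hP
  set Q : ℝ → ℝ := fun x => ∫ y in Ioo (0:ℝ) 1, ∫ z in Ioo (0:ℝ) 1,
    (w (x, y, z) + |dy (x, y, z)|) with hQ
  have hwdx : Continuous (fun q : ℝ × ℝ × ℝ => w q + |dx q|) := by fun_prop
  have hwdy : Continuous (fun q : ℝ × ℝ × ℝ => w q + |dy q|) := by fun_prop
  have hg0 : ∀ x y : ℝ, 0 ≤ ∫ z in Ioo (0:ℝ) 1, w (x, y, z) :=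
    fun x y => integral_nonneg fun z => hw0 _
  have hP0 : ∀ y, 0 ≤ P y := fun y => integral_nonneg fun x =>
    integral_nonneg fun z => add_nonneg (hw0 _) (abs_nonneg _)
  have hQ0 : ∀ x, 0 ≤ Q x := fun x => integral_nonneg fun y =>
    integral_nonneg fun z => add_nonneg (hw0 _) (abs_nonneg _)
  have hPc : Continuous P := by
    apply contParamX (fun y x => ∫ z in Ioo (0:ℝ) 1, (w (x, y, z) + |dx (x, y, z)|))
    have h := contIntZ (fun q => w q + |dx q|) hwdx
    exact h.comp (by fun_prop : Continuous fun p : ℝ × ℝ => ((p.2, p.1) : ℝ × ℝ))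
  have hQc : Continuous Q := contIntYZ (fun q => w q + |dy q|) hwdy
  -- pointwise bound of g by P
  have hgP : ∀ x y : ℝ, (∫ z in Ioo (0:ℝ) 1, w (x, y, z)) ≤ P y := by
    intro x y
    have h1 : ∀ z : ℝ, w (x, y, z) ≤ ∫ t in Ioo (0:ℝ) 1, (w (t, y, z) + |dx (t, y, z)|) := by
      intro z
      have := oned (fun t => w (t, y, z)) (fun t => dx (t, y, z))
        (fun t => hderx t y z) (by fun_prop) (fun t => hperx t y z) x
      have hadd : (∫ t in Ioo (0:ℝ) 1, (w (t, y, z) + |dx (t, y, z)|))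
          = (∫ t in Ioo (0:ℝ) 1, w (t, y, z)) + ∫ t in Ioo (0:ℝ) 1, |dx (t, y, z)| :=
        integral_add (intOn _ (by fun_prop)) (intOn _ (by fun_prop))
      rw [hadd]
      exact this
    have h2 : (∫ z in Ioo (0:ℝ) 1, w (x, y, z))
        ≤ ∫ z in Ioo (0:ℝ) 1, ∫ t in Ioo (0:ℝ) 1, (w (t, y, z) + |dx (t, y, z)|) := by
      apply integral_mono (intOn _ (by fun_prop))
      · apply intOn
        apply contParamX (fun z t => (w (t, y, z) + |dx (t, y, z)|))
        fun_prop
      · exact h1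
    have h3 : (∫ z in Ioo (0:ℝ) 1, ∫ t in Ioo (0:ℝ) 1, (w (t, y, z) + |dx (t, y, z)|)) = P y :=
      swapInt (fun z t => (w (t, y, z) + |dx (t, y, z)|)) (by fun_prop)
    rw [h3] at h2
    exact h2
  have hgQ : ∀ x y : ℝ, (∫ z in Ioo (0:ℝ) 1, w (x, y, z)) ≤ Q x := by
    intro x y
    have h1 : ∀ z : ℝ, w (x, y, z) ≤ ∫ t in Ioo (0:ℝ) 1, (w (x, t, z) + |dy (x, t, z)|) := by
      intro z
      have := oned (fun t => w (x, t, z)) (fun t => dy (x, t, z))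
        (fun t => hdery x t z) (by fun_prop) (fun t => hpery x t z) y
      have hadd : (∫ t in Ioo (0:ℝ) 1, (w (x, t, z) + |dy (x, t, z)|))
          = (∫ t in Ioo (0:ℝ) 1, w (x, t, z)) + ∫ t in Ioo (0:ℝ) 1, |dy (x, t, z)| :=
        integral_add (intOn _ (by fun_prop)) (intOn _ (by fun_prop))
      rw [hadd]
      exact this
    have h2 : (∫ z in Ioo (0:ℝ) 1, w (x, y, z))
        ≤ ∫ z in Ioo (0:ℝ) 1, ∫ t in Ioo (0:ℝ) 1, (w (x, t, z) + |dy (x, t, z)|) := by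
      apply integral_mono (intOn _ (by fun_prop))
      · apply intOn
        apply contParamX (fun z t => (w (x, t, z) + |dy (x, t, z)|))
        fun_prop
      · exact h1
    have h3 : (∫ z in Ioo (0:ℝ) 1, ∫ t in Ioo (0:ℝ) 1, (w (x, t, z) + |dy (x, t, z)|)) = Q x :=
      swapInt (fun z t => (w (x, t, z) + |dy (x, t, z)|)) (by fun_prop)
    rw [h3] at h2
    exact h2
  -- main chain
  have step1 : (∫ x in Ioo (0:ℝ) 1, ∫ y in Ioo (0:ℝ) 1, (∫ z in Ioo (0:ℝ) 1, w (x, y, z)) ^ 2)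
      ≤ ∫ x in Ioo (0:ℝ) 1, (Q x * ∫ y in Ioo (0:ℝ) 1, P y) := by
    apply integral_mono
    · apply intOn
      apply contParamX (fun x y => (∫ z in Ioo (0:ℝ) 1, w (x, y, z)) ^ 2)
      have h := contIntZ w hw
      fun_prop
    · exact intOn _ (by fun_prop)
    intro x
    have inner : (∫ y in Ioo (0:ℝ) 1, (∫ z in Ioo (0:ℝ) 1, w (x, y, z)) ^ 2)
        ≤ ∫ y in Ioo (0:ℝ) 1, (Q x * P y) := by
      apply integral_mono
      · apply intOn
        exact (contIntZsec w hw x).pow 2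
      · exact intOn _ (by fun_prop)
      intro y
      have := mul_le_mul (hgQ x y) (hgP x y) (hg0 x y) (hQ0 x)
      calc (∫ z in Ioo (0:ℝ) 1, w (x, y, z)) ^ 2
          = (∫ z in Ioo (0:ℝ) 1, w (x, y, z)) * (∫ z in Ioo (0:ℝ) 1, w (x, y, z)) := sq _
        _ ≤ Q x * P y := this
    calc (∫ y in Ioo (0:ℝ) 1, (∫ z in Ioo (0:ℝ) 1, w (x, y, z)) ^ 2)
        ≤ ∫ y in Ioo (0:ℝ) 1, (Q x * P y) := inner
      _ = Q x * ∫ y in Ioo (0:ℝ) 1, P y := integral_const_mul _ _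
  have hQint : (∫ x in Ioo (0:ℝ) 1, Q x) = I + Ny := by
    rw [hQ, hI, hNy]
    exact i3_add w (fun q => |dy q|) hw (by fun_prop)
  have hPint : (∫ y in Ioo (0:ℝ) 1, P y) = I + Nx := by
    have hswap : (∫ y in Ioo (0:ℝ) 1, P y)
        = ∫ x in Ioo (0:ℝ) 1, ∫ y in Ioo (0:ℝ) 1, ∫ z in Ioo (0:ℝ) 1,
            (w (x, y, z) + |dx (x, y, z)|) := by
      apply swapInt (fun y x => ∫ z in Ioo (0:ℝ) 1, (w (x, y, z) + |dx (x, y, z)|))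
      have h := contIntZ (fun q => w q + |dx q|) hwdx
      exact h.comp (by fun_prop : Continuous fun p : ℝ × ℝ => ((p.2, p.1) : ℝ × ℝ))
    rw [hswap, hI, hNx]
    exact i3_add w (fun q => |dx q|) hw (by fun_prop)
  have step2 : (∫ x in Ioo (0:ℝ) 1, (Q x * ∫ y in Ioo (0:ℝ) 1, P y))
      = (I + Ny) * (I + Nx) := by
    rw [integral_mul_const, hQint, hPint]
  have hI0 : 0 ≤ I := i3_nonneg w hw0
  have hNx0 : 0 ≤ Nx := i3_nonneg _ fun q => abs_nonneg _
  have hNy0 : 0 ≤ Ny := i3_nonneg _ fun q => abs_nonneg _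
  calc (∫ x in Ioo (0:ℝ) 1, ∫ y in Ioo (0:ℝ) 1, (∫ z in Ioo (0:ℝ) 1, w (x, y, z)) ^ 2)
      ≤ (I + Ny) * (I + Nx) := by rw [← step2]; exact step1
    _ ≤ (I + Nx + Ny) ^ 2 := by nlinarith

lemma hasDerivX (f : ℝ × ℝ × ℝ → ℝ) (hf : ContDiff ℝ (⊤ : ℕ∞) f) (x y z : ℝ) :
    HasDerivAt (fun t => f (t, y, z)) (pdX f (x, y, z)) x := by
  have hL : HasDerivAt (fun t : ℝ => ((t, y, z) : ℝ × ℝ × ℝ)) (1, 0, 0) x :=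
    (hasDerivAt_id x).prodMk ((hasDerivAt_const x y).prodMk (hasDerivAt_const x z))
  exact ((hf.differentiable (by simp) (x, y, z)).hasFDerivAt).comp_hasDerivAt x hL

lemma hasDerivY (f : ℝ × ℝ × ℝ → ℝ) (hf : ContDiff ℝ (⊤ : ℕ∞) f) (x y z : ℝ) :
    HasDerivAt (fun t => f (x, t, z)) (pdY f (x, y, z)) y := by
  have hL : HasDerivAt (fun t : ℝ => ((x, t, z) : ℝ × ℝ × ℝ)) (0, 1, 0) y :=
    (hasDerivAt_const y x).prodMk ((hasDerivAt_id y).prodMk (hasDerivAt_const y z))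
  exact ((hf.differentiable (by simp) (x, y, z)).hasFDerivAt).comp_hasDerivAt y hL

lemma contPdX (f : ℝ × ℝ × ℝ → ℝ) (hf : ContDiff ℝ (⊤ : ℕ∞) f) : Continuous (pdX f) := by
  have h := hf.continuous_fderiv (by simp)
  exact h.clm_apply continuous_const

lemma contPdY (f : ℝ × ℝ × ℝ → ℝ) (hf : ContDiff ℝ (⊤ : ℕ∞) f) : Continuous (pdY f) := by
  have h := hf.continuous_fderiv (by simp)
  exact h.clm_apply continuous_const

lemma i3_const_mul (c : ℝ) (f : ℝ × ℝ × ℝ → ℝ) :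
    (∫ x in Ioo (0:ℝ) 1, ∫ y in Ioo (0:ℝ) 1, ∫ z in Ioo (0:ℝ) 1, c * f (x, y, z))
      = c * ∫ x in Ioo (0:ℝ) 1, ∫ y in Ioo (0:ℝ) 1, ∫ z in Ioo (0:ℝ) 1, f (x, y, z) := by
  simp only [integral_const_mul]

lemma i3_congr (f g : ℝ × ℝ × ℝ → ℝ) (h : ∀ q, f q = g q) :
    (∫ x in Ioo (0:ℝ) 1, ∫ y in Ioo (0:ℝ) 1, ∫ z in Ioo (0:ℝ) 1, f (x, y, z))
      = ∫ x in Ioo (0:ℝ) 1, ∫ y in Ioo (0:ℝ) 1, ∫ z in Ioo (0:ℝ) 1, g (x, y, z) := by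
  simp only [h]

-- pointwise bound
lemma ptB (r v1 v2 a1 a2 b1 b2 : ℝ) (hr : 2 ≤ r) :
    |r * (v1 * a1 + v2 * a2) * (v1 ^ 2 + v2 ^ 2) ^ ((r - 2) / 2)|
      + |r * (v1 * b1 + v2 * b2) * (v1 ^ 2 + v2 ^ 2) ^ ((r - 2) / 2)|
    ≤ 2 * r * (Real.sqrt ((v1 ^ 2 + v2 ^ 2) ^ (r / 2))
        * Real.sqrt ((v1 ^ 2 + v2 ^ 2) ^ ((r - 2) / 2)
            * (a1 ^ 2 + b1 ^ 2 + a2 ^ 2 + b2 ^ 2))) := by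
  set u : ℝ := v1 ^ 2 + v2 ^ 2 with husdef
  set G : ℝ := a1 ^ 2 + b1 ^ 2 + a2 ^ 2 + b2 ^ 2 with hGdef
  have hu0 : 0 ≤ u := by positivity
  have hG0 : 0 ≤ G := by positivity
  have hr0 : (0:ℝ) < r := by linarith
  have hexp : u ^ ((r - 2) / 2) = Real.sqrt (u ^ (r - 2)) := by
    rw [Real.sqrt_eq_rpow, ← Real.rpow_mul hu0, show (r - 2) * (1 / 2) = (r - 2) / 2 by ring]
  have humul : ∀ c : ℝ, u * u ^ (r - 2) * c = u ^ (r - 1) * c := by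
    intro c
    congr 1
    rw [show u * u ^ (r - 2) = u ^ (1:ℝ) * u ^ (r - 2) by rw [Real.rpow_one],
      ← Real.rpow_add' hu0 (by intro hc; linarith), show (1:ℝ) + (r - 2) = r - 1 by ring]
  have main : ∀ c1 c2 : ℝ, c1 ^ 2 + c2 ^ 2 ≤ G →
      |r * (v1 * c1 + v2 * c2) * u ^ ((r - 2) / 2)| ≤ r * Real.sqrt (u ^ (r - 1) * G) := by
    intro c1 c2 hc
    have h1 : |r * (v1 * c1 + v2 * c2) * u ^ ((r - 2) / 2)|
        = r * |v1 * c1 + v2 * c2| * u ^ ((r - 2) / 2) := by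
      rw [abs_mul, abs_mul, abs_of_nonneg hr0.le, abs_of_nonneg (Real.rpow_nonneg hu0 _)]
    have h2 : |v1 * c1 + v2 * c2| ≤ Real.sqrt (u * (c1 ^ 2 + c2 ^ 2)) := by
      rw [← Real.sqrt_sq_eq_abs]
      apply Real.sqrt_le_sqrt
      nlinarith [sq_nonneg (v1 * c2 - v2 * c1)]
    have h3 : r * |v1 * c1 + v2 * c2| * u ^ ((r - 2) / 2)
        ≤ r * Real.sqrt (u * (c1 ^ 2 + c2 ^ 2)) * Real.sqrt (u ^ (r - 2)) := by
      rw [hexp] at *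
      have := mul_le_mul_of_nonneg_left h2 hr0.le
      exact mul_le_mul_of_nonneg_right this (Real.sqrt_nonneg _)
    have h4 : Real.sqrt (u * (c1 ^ 2 + c2 ^ 2)) * Real.sqrt (u ^ (r - 2))
        = Real.sqrt (u ^ (r - 1) * (c1 ^ 2 + c2 ^ 2)) := by
      rw [← Real.sqrt_mul (by positivity)]
      rw [show u * (c1 ^ 2 + c2 ^ 2) * u ^ (r - 2) = u * u ^ (r - 2) * (c1 ^ 2 + c2 ^ 2) by ring,
        humul]
    have h5 : Real.sqrt (u ^ (r - 1) * (c1 ^ 2 + c2 ^ 2)) ≤ Real.sqrt (u ^ (r - 1) * G) :=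
      Real.sqrt_le_sqrt (mul_le_mul_of_nonneg_left hc (Real.rpow_nonneg hu0 _))
    calc |r * (v1 * c1 + v2 * c2) * u ^ ((r - 2) / 2)|
        = r * |v1 * c1 + v2 * c2| * u ^ ((r - 2) / 2) := h1
      _ ≤ r * Real.sqrt (u * (c1 ^ 2 + c2 ^ 2)) * Real.sqrt (u ^ (r - 2)) := h3
      _ = r * Real.sqrt (u ^ (r - 1) * (c1 ^ 2 + c2 ^ 2)) := by rw [mul_assoc, h4]
      _ ≤ r * Real.sqrt (u ^ (r - 1) * G) := mul_le_mul_of_nonneg_left h5 hr0.le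
  have hRHS : Real.sqrt (u ^ (r / 2)) * Real.sqrt (u ^ ((r - 2) / 2) * G)
      = Real.sqrt (u ^ (r - 1) * G) := by
    rw [← Real.sqrt_mul (Real.rpow_nonneg hu0 _), ← mul_assoc,
      ← Real.rpow_add' hu0 (by intro hc; linarith),
      show r / 2 + (r - 2) / 2 = r - 1 by ring]
  have hA := main a1 a2 (by nlinarith [sq_nonneg b1, sq_nonneg b2])
  have hB := main b1 b2 (by nlinarith [sq_nonneg a1, sq_nonneg a2])
  rw [hRHS]
  linarith

lemma derivWx (r : ℝ) (hr : 2 ≤ r) (v1 v2 : ℝ × ℝ × ℝ → ℝ)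
    (hv1 : ContDiff ℝ (⊤ : ℕ∞) v1) (hv2 : ContDiff ℝ (⊤ : ℕ∞) v2) (x y z : ℝ) :
    HasDerivAt (fun t => (v1 (t, y, z) ^ 2 + v2 (t, y, z) ^ 2) ^ (r / 2))
      (r * (v1 (x, y, z) * pdX v1 (x, y, z) + v2 (x, y, z) * pdX v2 (x, y, z))
        * (v1 (x, y, z) ^ 2 + v2 (x, y, z) ^ 2) ^ ((r - 2) / 2)) x := by
  have h1 := hasDerivX v1 hv1 x y z
  have h2 := hasDerivX v2 hv2 x y z
  have hu := (h1.pow 2).add (h2.pow 2)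
  have hw := hu.rpow_const (p := r / 2) (Or.inr (by linarith))
  convert hw using 1
  · rfl
  rw [show r / 2 - 1 = (r - 2) / 2 by ring]
  simp only [Pi.add_apply, Pi.pow_apply]
  push_cast
  ring

lemma derivWy (r : ℝ) (hr : 2 ≤ r) (v1 v2 : ℝ × ℝ × ℝ → ℝ)
    (hv1 : ContDiff ℝ (⊤ : ℕ∞) v1) (hv2 : ContDiff ℝ (⊤ : ℕ∞) v2) (x y z : ℝ) :
    HasDerivAt (fun t => (v1 (x, t, z) ^ 2 + v2 (x, t, z) ^ 2) ^ (r / 2))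
      (r * (v1 (x, y, z) * pdY v1 (x, y, z) + v2 (x, y, z) * pdY v2 (x, y, z))
        * (v1 (x, y, z) ^ 2 + v2 (x, y, z) ^ 2) ^ ((r - 2) / 2)) y := by
  have h1 := hasDerivY v1 hv1 x y z
  have h2 := hasDerivY v2 hv2 x y z
  have hu := (h1.pow 2).add (h2.pow 2)
  have hw := hu.rpow_const (p := r / 2) (Or.inr (by linarith))
  convert hw using 1
  · rfl
  rw [show r / 2 - 1 = (r - 2) / 2 by ring]
  simp only [Pi.add_apply, Pi.pow_apply]
  push_cast
  ring


/-- Estimate (3.10):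
`(∫_M (∫₀¹ |ṽ|^r dz)² dxdy)^{1/2} ≤ C ‖ṽ‖_r^{r/2} (∫_Ω |ṽ|^{r-2}|∇_h ṽ|²)^{1/2} + ‖ṽ‖_r^r`. -/
theorem slice_estimate_one (r : ℝ) (hr : 2 ≤ r) :
    ∃ C : ℝ, 0 < C ∧ ∀ vt1 vt2 : ℝ × ℝ × ℝ → ℝ,
      ContDiff ℝ (⊤ : ℕ∞) vt1 → ContDiff ℝ (⊤ : ℕ∞) vt2 →
      (∀ x y z : ℝ, vt1 (x + 1, y, z) = vt1 (x, y, z) ∧ vt2 (x + 1, y, z) = vt2 (x, y, z)) →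
      (∀ x y z : ℝ, vt1 (x, y + 1, z) = vt1 (x, y, z) ∧ vt2 (x, y + 1, z) = vt2 (x, y, z)) →
      (∫ x in Ioo (0:ℝ) 1, ∫ y in Ioo (0:ℝ) 1,
          (∫ z in Ioo (0:ℝ) 1,
              ((vt1 (x, y, z)) ^ 2 + (vt2 (x, y, z)) ^ 2) ^ (r / 2)) ^ 2) ^ ((1:ℝ)/2) ≤
        C * ((∫ x in Ioo (0:ℝ) 1, ∫ y in Ioo (0:ℝ) 1, ∫ z in Ioo (0:ℝ) 1,
                ((vt1 (x, y, z)) ^ 2 + (vt2 (x, y, z)) ^ 2) ^ (r / 2)) ^ (1 / r)) ^ (r / 2) *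
            (∫ x in Ioo (0:ℝ) 1, ∫ y in Ioo (0:ℝ) 1, ∫ z in Ioo (0:ℝ) 1,
                ((vt1 (x, y, z)) ^ 2 + (vt2 (x, y, z)) ^ 2) ^ ((r - 2) / 2) *
                  ((pdX vt1 (x, y, z)) ^ 2 + (pdY vt1 (x, y, z)) ^ 2 +
                    (pdX vt2 (x, y, z)) ^ 2 + (pdY vt2 (x, y, z)) ^ 2)) ^ ((1:ℝ)/2) +
          ((∫ x in Ioo (0:ℝ) 1, ∫ y in Ioo (0:ℝ) 1, ∫ z in Ioo (0:ℝ) 1,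
              ((vt1 (x, y, z)) ^ 2 + (vt2 (x, y, z)) ^ 2) ^ (r / 2)) ^ (1 / r)) ^ r := by
  refine ⟨2 * r + 1, by linarith, ?_⟩
  intro v1 v2 hv1 hv2 hpx hpy
  have hrne : r ≠ 0 := by linarith
  have hc1 : Continuous v1 := hv1.continuous
  have hc2 : Continuous v2 := hv2.continuous
  have hpdx1 : Continuous (pdX v1) := contPdX v1 hv1
  have hpdx2 : Continuous (pdX v2) := contPdX v2 hv2
  have hpdy1 : Continuous (pdY v1) := contPdY v1 hv1
  have hpdy2 : Continuous (pdY v2) := contPdY v2 hv2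
  set w : ℝ × ℝ × ℝ → ℝ := fun q => (v1 q ^ 2 + v2 q ^ 2) ^ (r / 2) with hwdef
  set dxf : ℝ × ℝ × ℝ → ℝ := fun q =>
    r * (v1 q * pdX v1 q + v2 q * pdX v2 q) * (v1 q ^ 2 + v2 q ^ 2) ^ ((r - 2) / 2) with hdxdef
  set dyf : ℝ × ℝ × ℝ → ℝ := fun q =>
    r * (v1 q * pdY v1 q + v2 q * pdY v2 q) * (v1 q ^ 2 + v2 q ^ 2) ^ ((r - 2) / 2) with hdydef
  set hfn : ℝ × ℝ × ℝ → ℝ := fun q =>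
    (v1 q ^ 2 + v2 q ^ 2) ^ ((r - 2) / 2) *
      (pdX v1 q ^ 2 + pdY v1 q ^ 2 + pdX v2 q ^ 2 + pdY v2 q ^ 2) with hhdef
  have huc : Continuous (fun q : ℝ × ℝ × ℝ => v1 q ^ 2 + v2 q ^ 2) := by fun_prop
  have hwc : Continuous w := contRpow (r / 2) (by linarith) _ huc
  have hw0 : ∀ q, 0 ≤ w q := fun q => Real.rpow_nonneg (by positivity) _
  have hrpc : Continuous (fun q : ℝ × ℝ × ℝ => (v1 q ^ 2 + v2 q ^ 2) ^ ((r - 2) / 2)) :=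
    contRpow ((r - 2) / 2) (by linarith) _ huc
  have hrp0 : ∀ q : ℝ × ℝ × ℝ, 0 ≤ (v1 q ^ 2 + v2 q ^ 2) ^ ((r - 2) / 2) :=
    fun q => Real.rpow_nonneg (by positivity) _
  have hdxc : Continuous dxf :=
    (continuous_const.mul ((hc1.mul hpdx1).add (hc2.mul hpdx2))).mul hrpc
  have hdyc : Continuous dyf :=
    (continuous_const.mul ((hc1.mul hpdy1).add (hc2.mul hpdy2))).mul hrpc
  have hhc : Continuous hfn := by
    apply hrpc.mul
    fun_prop
  have hh0 : ∀ q, 0 ≤ hfn q := fun q => mul_nonneg (hrp0 q) (by positivity)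
  have hperwx : ∀ x y z : ℝ, w (x + 1, y, z) = w (x, y, z) := by
    intro x y z
    show (v1 (x + 1, y, z) ^ 2 + v2 (x + 1, y, z) ^ 2) ^ (r / 2)
      = (v1 (x, y, z) ^ 2 + v2 (x, y, z) ^ 2) ^ (r / 2)
    rw [(hpx x y z).1, (hpx x y z).2]
  have hperwy : ∀ x y z : ℝ, w (x, y + 1, z) = w (x, y, z) := by
    intro x y z
    show (v1 (x, y + 1, z) ^ 2 + v2 (x, y + 1, z) ^ 2) ^ (r / 2)
      = (v1 (x, y, z) ^ 2 + v2 (x, y, z) ^ 2) ^ (r / 2)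
    rw [(hpy x y z).1, (hpy x y z).2]
  have hderx : ∀ x y z : ℝ, HasDerivAt (fun t => w (t, y, z)) (dxf (x, y, z)) x :=
    fun x y z => derivWx r hr v1 v2 hv1 hv2 x y z
  have hdery : ∀ x y z : ℝ, HasDerivAt (fun t => w (x, t, z)) (dyf (x, y, z)) y :=
    fun x y z => derivWy r hr v1 v2 hv1 hv2 x y z
  -- abbreviations
  set I := ∫ x in Ioo (0:ℝ) 1, ∫ y in Ioo (0:ℝ) 1, ∫ z in Ioo (0:ℝ) 1, w (x, y, z) with hIdef
  set NX := ∫ x in Ioo (0:ℝ) 1, ∫ y in Ioo (0:ℝ) 1, ∫ z in Ioo (0:ℝ) 1, |dxf (x, y, z)| with hNXdef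
  set NY := ∫ x in Ioo (0:ℝ) 1, ∫ y in Ioo (0:ℝ) 1, ∫ z in Ioo (0:ℝ) 1, |dyf (x, y, z)| with hNYdef
  set D := ∫ x in Ioo (0:ℝ) 1, ∫ y in Ioo (0:ℝ) 1, ∫ z in Ioo (0:ℝ) 1, hfn (x, y, z) with hDdef
  set S := ∫ x in Ioo (0:ℝ) 1, ∫ y in Ioo (0:ℝ) 1,
    (∫ z in Ioo (0:ℝ) 1, w (x, y, z)) ^ 2 with hSdef
  have hI0 : 0 ≤ I := i3_nonneg w hw0
  have hNX0 : 0 ≤ NX := i3_nonneg _ fun q => abs_nonneg _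
  have hNY0 : 0 ≤ NY := i3_nonneg _ fun q => abs_nonneg _
  have hD0 : 0 ≤ D := i3_nonneg _ hh0
  have hS0 : 0 ≤ S := integral_nonneg fun x => integral_nonneg fun y => sq_nonneg _
  have hkey : S ≤ (I + NX + NY) ^ 2 :=
    key w dxf dyf hwc hdxc hdyc hw0 hderx hdery hperwx hperwy
  -- bound NX + NY
  have hsum : NX + NY = ∫ x in Ioo (0:ℝ) 1, ∫ y in Ioo (0:ℝ) 1, ∫ z in Ioo (0:ℝ) 1,
      (|dxf (x, y, z)| + |dyf (x, y, z)|) :=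
    (i3_add (fun q => |dxf q|) (fun q => |dyf q|) hdxc.abs hdyc.abs).symm
  have hmono : (∫ x in Ioo (0:ℝ) 1, ∫ y in Ioo (0:ℝ) 1, ∫ z in Ioo (0:ℝ) 1,
      (|dxf (x, y, z)| + |dyf (x, y, z)|))
      ≤ ∫ x in Ioo (0:ℝ) 1, ∫ y in Ioo (0:ℝ) 1, ∫ z in Ioo (0:ℝ) 1,
        (2 * r) * (Real.sqrt (w (x, y, z)) * Real.sqrt (hfn (x, y, z))) := by
    apply i3_mono _ _ (hdxc.abs.add hdyc.abs)
      (continuous_const.mul ((hwc.sqrt).mul (hhc.sqrt)))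
    intro q
    exact ptB r (v1 q) (v2 q) (pdX v1 q) (pdX v2 q) (pdY v1 q) (pdY v2 q) hr
  have hconst : (∫ x in Ioo (0:ℝ) 1, ∫ y in Ioo (0:ℝ) 1, ∫ z in Ioo (0:ℝ) 1,
      (2 * r) * (Real.sqrt (w (x, y, z)) * Real.sqrt (hfn (x, y, z))))
      = (2 * r) * ∫ x in Ioo (0:ℝ) 1, ∫ y in Ioo (0:ℝ) 1, ∫ z in Ioo (0:ℝ) 1,
        Real.sqrt (w (x, y, z)) * Real.sqrt (hfn (x, y, z)) :=
    i3_const_mul (2 * r) (fun q => Real.sqrt (w q) * Real.sqrt (hfn q))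
  have hcs : (∫ x in Ioo (0:ℝ) 1, ∫ y in Ioo (0:ℝ) 1, ∫ z in Ioo (0:ℝ) 1,
      Real.sqrt (w (x, y, z)) * Real.sqrt (hfn (x, y, z)))
      ≤ Real.sqrt I * Real.sqrt D := by
    have h := cs3 (fun q => Real.sqrt (w q)) (fun q => Real.sqrt (hfn q))
      hwc.sqrt hhc.sqrt (fun q => Real.sqrt_nonneg _) (fun q => Real.sqrt_nonneg _)
    have e1 : (∫ x in Ioo (0:ℝ) 1, ∫ y in Ioo (0:ℝ) 1, ∫ z in Ioo (0:ℝ) 1,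
        Real.sqrt (w (x, y, z)) ^ 2) = I :=
      i3_congr (fun q => Real.sqrt (w q) ^ 2) w (fun q => Real.sq_sqrt (hw0 q))
    have e2 : (∫ x in Ioo (0:ℝ) 1, ∫ y in Ioo (0:ℝ) 1, ∫ z in Ioo (0:ℝ) 1,
        Real.sqrt (hfn (x, y, z)) ^ 2) = D :=
      i3_congr (fun q => Real.sqrt (hfn q) ^ 2) hfn (fun q => Real.sq_sqrt (hh0 q))
    rw [e1, e2] at h
    exact h
  have hNbound : NX + NY ≤ (2 * r) * (Real.sqrt I * Real.sqrt D) := by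
    rw [hsum]
    calc (∫ x in Ioo (0:ℝ) 1, ∫ y in Ioo (0:ℝ) 1, ∫ z in Ioo (0:ℝ) 1,
        (|dxf (x, y, z)| + |dyf (x, y, z)|))
        ≤ ∫ x in Ioo (0:ℝ) 1, ∫ y in Ioo (0:ℝ) 1, ∫ z in Ioo (0:ℝ) 1,
            (2 * r) * (Real.sqrt (w (x, y, z)) * Real.sqrt (hfn (x, y, z))) := hmono
      _ = (2 * r) * ∫ x in Ioo (0:ℝ) 1, ∫ y in Ioo (0:ℝ) 1, ∫ z in Ioo (0:ℝ) 1,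
            Real.sqrt (w (x, y, z)) * Real.sqrt (hfn (x, y, z)) := hconst
      _ ≤ (2 * r) * (Real.sqrt I * Real.sqrt D) :=
          mul_le_mul_of_nonneg_left hcs (by linarith)
  -- conclude
  have hsqS : S ^ ((1:ℝ)/2) ≤ I + NX + NY := by
    rw [← Real.sqrt_eq_rpow]
    calc Real.sqrt S ≤ Real.sqrt ((I + NX + NY) ^ 2) := Real.sqrt_le_sqrt hkey
      _ = I + NX + NY := Real.sqrt_sq (by linarith)
  have e1 : (I ^ (1 / r)) ^ (r / 2) = Real.sqrt I := by
    rw [← Real.rpow_mul hI0, show 1 / r * (r / 2) = (1:ℝ)/2 by field_simp,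
      ← Real.sqrt_eq_rpow]
  have e2 : (I ^ (1 / r)) ^ r = I := by
    rw [← Real.rpow_mul hI0, show 1 / r * r = (1:ℝ) by field_simp, Real.rpow_one]
  have e3 : D ^ ((1:ℝ)/2) = Real.sqrt D := (Real.sqrt_eq_rpow D).symm
  have final : S ^ ((1:ℝ)/2)
      ≤ (2 * r + 1) * (I ^ (1 / r)) ^ (r / 2) * D ^ ((1:ℝ)/2) + (I ^ (1 / r)) ^ r := by
    rw [e1, e2, e3]
    have hprod : 0 ≤ Real.sqrt I * Real.sqrt D :=
      mul_nonneg (Real.sqrt_nonneg _) (Real.sqrt_nonneg _)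
    calc S ^ ((1:ℝ)/2) ≤ I + NX + NY := hsqS
      _ ≤ I + (2 * r) * (Real.sqrt I * Real.sqrt D) := by linarith
      _ ≤ (2 * r + 1) * Real.sqrt I * Real.sqrt D + I := by nlinarith
  exact final
end

section
/- Let $w$ be a smooth function on $\Omega = (0,1)^3$, periodic in $x,y$, with $w=0$ on $z=0$ and $z=1$, and let $v$ be a smooth horizontal vector field with $\nabla_h\cdot v + w_z = 0$. Then $\int_\Omega w\,w_z\,(\Delta_h w + w_{zz})\,dxdydz = -\frac{1}{2}\int_\Omega \nabla_h\left(|\nabla_h w|^2 + w_z^2\right)\cdot v\;dxdydz$. -/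
open MeasureTheory Set

/-- Partial derivative in the `z`-direction. -/
noncomputable def pdZ (f : ℝ × ℝ × ℝ → ℝ) (q : ℝ × ℝ × ℝ) : ℝ := fderiv ℝ f q (0, 0, 1)

abbrev V3 : Type := ℝ × ℝ × ℝ

section Infra

variable {f g : V3 → ℝ} {e : V3} {q : V3}

lemma pdE_contDiff (hf : ContDiff ℝ (⊤ : ℕ∞) f) (e : V3) :
    ContDiff ℝ (⊤ : ℕ∞) (fun q => fderiv ℝ f q e) :=
  (ContinuousLinearMap.apply ℝ ℝ e).contDiff.comp (hf.fderiv_right (by simp))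

lemma pdX_contDiff (hf : ContDiff ℝ (⊤ : ℕ∞) f) : ContDiff ℝ (⊤ : ℕ∞) (pdX f) := pdE_contDiff hf _
lemma pdY_contDiff (hf : ContDiff ℝ (⊤ : ℕ∞) f) : ContDiff ℝ (⊤ : ℕ∞) (pdY f) := pdE_contDiff hf _
lemma pdZ_contDiff (hf : ContDiff ℝ (⊤ : ℕ∞) f) : ContDiff ℝ (⊤ : ℕ∞) (pdZ f) := pdE_contDiff hf _

lemma pdE_add (hf : DifferentiableAt ℝ f q) (hg : DifferentiableAt ℝ g q) :
    fderiv ℝ (fun p => f p + g p) q e = fderiv ℝ f q e + fderiv ℝ g q e := by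
  rw [fderiv_fun_add hf hg]; rfl

lemma pdE_mul (hf : DifferentiableAt ℝ f q) (hg : DifferentiableAt ℝ g q) :
    fderiv ℝ (fun p => f p * g p) q e = fderiv ℝ f q e * g q + f q * fderiv ℝ g q e := by
  rw [fderiv_fun_mul hf hg]
  simp [ContinuousLinearMap.add_apply, ContinuousLinearMap.smul_apply]
  ring

lemma pdE_const_mul (c : ℝ) (hf : DifferentiableAt ℝ f q) :
    fderiv ℝ (fun p => c * f p) q e = c * fderiv ℝ f q e := by
  rw [fderiv_const_mul hf]; simp

lemma pdE_sq (hf : DifferentiableAt ℝ f q) :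
    fderiv ℝ (fun p => f p ^ 2) q e = 2 * f q * fderiv ℝ f q e := by
  have : (fun p => f p ^ 2) = fun p => f p * f p := by ext p; ring
  rw [this, pdE_mul hf hf]; ring

/-- Clairaut symmetry for smooth functions. -/
lemma pdE_comm (hf : ContDiff ℝ (⊤ : ℕ∞) f) (q e e' : V3) :
    fderiv ℝ (fun p => fderiv ℝ f p e) q e' = fderiv ℝ (fun p => fderiv ℝ f p e') q e := by
  have hd : ContDiff ℝ (⊤ : ℕ∞) (fderiv ℝ f) := hf.fderiv_right (by simp)
  have hda : DifferentiableAt ℝ (fderiv ℝ f) q := (hd.differentiable (by simp)).differentiableAt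
  have key : ∀ v u : V3, fderiv ℝ (fun p => fderiv ℝ f p v) q u
      = fderiv ℝ (fderiv ℝ f) q u v := by
    intro v u
    rw [fderiv_clm_apply hda (differentiableAt_const v)]
    simp
  rw [key e e', key e' e]
  exact second_derivative_symmetric (fun y => (hf.differentiable (by simp) y).hasFDerivAt)
    hda.hasFDerivAt e' e

end Infra

section FTC

variable {f : V3 → ℝ}

lemma hasDerivAt_sliceX (hf : ContDiff ℝ (⊤ : ℕ∞) f) (x y z : ℝ) :
    HasDerivAt (fun t => f (t, y, z)) (pdX f (x, y, z)) x := by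
  have hL : HasDerivAt (fun t : ℝ => ((t, y, z) : V3)) ((1:ℝ), (0:ℝ), (0:ℝ)) x :=
    (hasDerivAt_id x).prodMk ((hasDerivAt_const x y).prodMk (hasDerivAt_const x z))
  exact (hf.differentiable (by simp) (x, y, z)).hasFDerivAt.comp_hasDerivAt x hL

lemma hasDerivAt_sliceY (hf : ContDiff ℝ (⊤ : ℕ∞) f) (x y z : ℝ) :
    HasDerivAt (fun t => f (x, t, z)) (pdY f (x, y, z)) y := by
  have hL : HasDerivAt (fun t : ℝ => ((x, t, z) : V3)) ((0:ℝ), (1:ℝ), (0:ℝ)) y :=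
    (hasDerivAt_const y x).prodMk ((hasDerivAt_id y).prodMk (hasDerivAt_const y z))
  exact (hf.differentiable (by simp) (x, y, z)).hasFDerivAt.comp_hasDerivAt y hL

lemma hasDerivAt_sliceZ (hf : ContDiff ℝ (⊤ : ℕ∞) f) (x y z : ℝ) :
    HasDerivAt (fun t => f (x, y, t)) (pdZ f (x, y, z)) z := by
  have hL : HasDerivAt (fun t : ℝ => ((x, y, t) : V3)) ((0:ℝ), (0:ℝ), (1:ℝ)) z :=
    (hasDerivAt_const z x).prodMk ((hasDerivAt_const z y).prodMk (hasDerivAt_id z))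
  exact (hf.differentiable (by simp) (x, y, z)).hasFDerivAt.comp_hasDerivAt z hL

lemma intX (hf : ContDiff ℝ (⊤ : ℕ∞) f) (y z : ℝ) :
    ∫ x in Ioo (0:ℝ) 1, pdX f (x, y, z) = f (1, y, z) - f (0, y, z) := by
  rw [← integral_Ioc_eq_integral_Ioo, ← intervalIntegral.integral_of_le zero_le_one]
  exact intervalIntegral.integral_eq_sub_of_hasDerivAt
    (fun t _ => hasDerivAt_sliceX hf t y z)
    (((pdX_contDiff hf).continuous.comp (by fun_prop)).intervalIntegrable 0 1)

lemma intY (hf : ContDiff ℝ (⊤ : ℕ∞) f) (x z : ℝ) :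
    ∫ y in Ioo (0:ℝ) 1, pdY f (x, y, z) = f (x, 1, z) - f (x, 0, z) := by
  rw [← integral_Ioc_eq_integral_Ioo, ← intervalIntegral.integral_of_le zero_le_one]
  exact intervalIntegral.integral_eq_sub_of_hasDerivAt
    (fun t _ => hasDerivAt_sliceY hf x t z)
    (((pdY_contDiff hf).continuous.comp (by fun_prop)).intervalIntegrable 0 1)

lemma intZ (hf : ContDiff ℝ (⊤ : ℕ∞) f) (x y : ℝ) :
    ∫ z in Ioo (0:ℝ) 1, pdZ f (x, y, z) = f (x, y, 1) - f (x, y, 0) := by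
  rw [← integral_Ioc_eq_integral_Ioo, ← intervalIntegral.integral_of_le zero_le_one]
  exact intervalIntegral.integral_eq_sub_of_hasDerivAt
    (fun t _ => hasDerivAt_sliceZ hf x y t)
    (((pdZ_contDiff hf).continuous.comp (by fun_prop)).intervalIntegrable 0 1)

end FTC

section Int

lemma contIntOn {f : ℝ → ℝ} (hf : Continuous f) : IntegrableOn f (Ioo (0:ℝ) 1) :=
  (hf.integrableOn_Icc (a := 0) (b := 1)).mono_set Ioo_subset_Icc_self

/-- Fubini swap for continuous functions on the unit square. -/
lemma swap2 {F : ℝ × ℝ → ℝ} (hF : Continuous F) :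
    (∫ u in Ioo (0:ℝ) 1, ∫ v in Ioo (0:ℝ) 1, F (u, v)) =
      ∫ v in Ioo (0:ℝ) 1, ∫ u in Ioo (0:ℝ) 1, F (u, v) := by
  apply MeasureTheory.integral_integral_swap
  have h1 : IntegrableOn F (Icc (0:ℝ) 1 ×ˢ Icc (0:ℝ) 1) :=
    hF.continuousOn.integrableOn_compact (isCompact_Icc.prod isCompact_Icc)
  have h2 : IntegrableOn F (Ioo (0:ℝ) 1 ×ˢ Ioo (0:ℝ) 1) :=
    h1.mono_set (prod_mono Ioo_subset_Icc_self Ioo_subset_Icc_self)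
  rw [Measure.prod_restrict, ← Measure.volume_eq_prod]
  exact h2

/-- Continuity of the parametric `z`-integral. -/
lemma contParam {h : V3 → ℝ} (hh : Continuous h) :
    Continuous (fun p : ℝ × ℝ => ∫ z in Ioo (0:ℝ) 1, h (p.1, p.2, z)) := by
  have : (fun p : ℝ × ℝ => ∫ z in Ioo (0:ℝ) 1, h (p.1, p.2, z)) =
      fun p : ℝ × ℝ => ∫ z in Icc (0:ℝ) 1, h (p.1, p.2, z) := by
    ext p; rw [integral_Icc_eq_integral_Ioo]
  rw [this]
  exact continuous_parametric_integral_of_continuous (by fun_prop) isCompact_Icc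

/-- Continuity of the doubly-parametric integral. -/
lemma contParam2 {h : V3 → ℝ} (hh : Continuous h) :
    Continuous (fun x : ℝ => ∫ y in Ioo (0:ℝ) 1, ∫ z in Ioo (0:ℝ) 1, h (x, y, z)) := by
  have : (fun x : ℝ => ∫ y in Ioo (0:ℝ) 1, ∫ z in Ioo (0:ℝ) 1, h (x, y, z)) =
      fun x : ℝ => ∫ y in Icc (0:ℝ) 1, ∫ z in Ioo (0:ℝ) 1, h (x, y, z) := by
    ext x; rw [integral_Icc_eq_integral_Ioo]
  rw [this]
  exact continuous_parametric_integral_of_continuous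
    (by exact (contParam hh)) isCompact_Icc

end Int

section PD

variable {f g : V3 → ℝ} {q : V3}

lemma pdX_add (hf : DifferentiableAt ℝ f q) (hg : DifferentiableAt ℝ g q) :
    pdX (fun p => f p + g p) q = pdX f q + pdX g q := pdE_add hf hg
lemma pdY_add (hf : DifferentiableAt ℝ f q) (hg : DifferentiableAt ℝ g q) :
    pdY (fun p => f p + g p) q = pdY f q + pdY g q := pdE_add hf hg
lemma pdZ_add (hf : DifferentiableAt ℝ f q) (hg : DifferentiableAt ℝ g q) :
    pdZ (fun p => f p + g p) q = pdZ f q + pdZ g q := pdE_add hf hg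

lemma pdE_sub (hf : DifferentiableAt ℝ f q) (hg : DifferentiableAt ℝ g q) {e : V3} :
    fderiv ℝ (fun p => f p - g p) q e = fderiv ℝ f q e - fderiv ℝ g q e := by
  rw [fderiv_fun_sub hf hg]; rfl

lemma pdZ_sub (hf : DifferentiableAt ℝ f q) (hg : DifferentiableAt ℝ g q) :
    pdZ (fun p => f p - g p) q = pdZ f q - pdZ g q := pdE_sub hf hg

lemma pdX_mul (hf : DifferentiableAt ℝ f q) (hg : DifferentiableAt ℝ g q) :
    pdX (fun p => f p * g p) q = pdX f q * g q + f q * pdX g q := pdE_mul hf hg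
lemma pdY_mul (hf : DifferentiableAt ℝ f q) (hg : DifferentiableAt ℝ g q) :
    pdY (fun p => f p * g p) q = pdY f q * g q + f q * pdY g q := pdE_mul hf hg
lemma pdZ_mul (hf : DifferentiableAt ℝ f q) (hg : DifferentiableAt ℝ g q) :
    pdZ (fun p => f p * g p) q = pdZ f q * g q + f q * pdZ g q := pdE_mul hf hg

lemma pdX_const_mul (c : ℝ) (hf : DifferentiableAt ℝ f q) :
    pdX (fun p => c * f p) q = c * pdX f q := pdE_const_mul c hf
lemma pdY_const_mul (c : ℝ) (hf : DifferentiableAt ℝ f q) :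
    pdY (fun p => c * f p) q = c * pdY f q := pdE_const_mul c hf
lemma pdZ_const_mul (c : ℝ) (hf : DifferentiableAt ℝ f q) :
    pdZ (fun p => c * f p) q = c * pdZ f q := pdE_const_mul c hf

lemma pdX_sq (hf : DifferentiableAt ℝ f q) :
    pdX (fun p => f p ^ 2) q = 2 * f q * pdX f q := pdE_sq hf
lemma pdY_sq (hf : DifferentiableAt ℝ f q) :
    pdY (fun p => f p ^ 2) q = 2 * f q * pdY f q := pdE_sq hf
lemma pdZ_sq (hf : DifferentiableAt ℝ f q) :
    pdZ (fun p => f p ^ 2) q = 2 * f q * pdZ f q := pdE_sq hf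

lemma pdX_pdZ_comm (hf : ContDiff ℝ (⊤ : ℕ∞) f) (q : V3) :
    pdX (pdZ f) q = pdZ (pdX f) q := pdE_comm hf q (0,0,1) (1,0,0)
lemma pdY_pdZ_comm (hf : ContDiff ℝ (⊤ : ℕ∞) f) (q : V3) :
    pdY (pdZ f) q = pdZ (pdY f) q := pdE_comm hf q (0,0,1) (0,1,0)

end PD

section Periodic

variable {f : V3 → ℝ}

lemma fderiv_per (hf : ContDiff ℝ (⊤ : ℕ∞) f) (c : V3) (hper : ∀ q : V3, f (q + c) = f q)
    (q e : V3) : fderiv ℝ f (q + c) e = fderiv ℝ f q e := by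
  have h1 : HasFDerivAt (fun p : V3 => p + c) (ContinuousLinearMap.id ℝ V3) q :=
    (hasFDerivAt_id q).add_const c
  have h2' : HasFDerivAt f ((fderiv ℝ f (q + c)).comp (ContinuousLinearMap.id ℝ V3)) q := by
    have h2 := ((hf.differentiable (by simp) (q + c)).hasFDerivAt).comp q h1
    rwa [show (f ∘ fun p : V3 => p + c) = f from funext fun p => hper p] at h2
  rw [h2'.fderiv]
  simp

lemma per_of_perX (hper : ∀ x y z : ℝ, f (x + 1, y, z) = f (x, y, z)) :
    ∀ q : V3, f (q + ((1:ℝ), (0:ℝ), (0:ℝ))) = f q := by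
  rintro ⟨x, y, z⟩
  simp only [Prod.mk_add_mk, add_zero]
  exact hper x y z

lemma per_of_perY (hper : ∀ x y z : ℝ, f (x, y + 1, z) = f (x, y, z)) :
    ∀ q : V3, f (q + ((0:ℝ), (1:ℝ), (0:ℝ))) = f q := by
  rintro ⟨x, y, z⟩
  simp only [Prod.mk_add_mk, add_zero, zero_add]
  exact hper x y z

lemma pd_perX (hf : ContDiff ℝ (⊤ : ℕ∞) f) (hper : ∀ x y z : ℝ, f (x + 1, y, z) = f (x, y, z))
    (e : V3) (x y z : ℝ) : fderiv ℝ f (x + 1, y, z) e = fderiv ℝ f (x, y, z) e := by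
  have h := fderiv_per hf ((1:ℝ), (0:ℝ), (0:ℝ)) (per_of_perX hper) (x, y, z) e
  simpa only [Prod.mk_add_mk, add_zero] using h

lemma pd_perY (hf : ContDiff ℝ (⊤ : ℕ∞) f) (hper : ∀ x y z : ℝ, f (x, y + 1, z) = f (x, y, z))
    (e : V3) (x y z : ℝ) : fderiv ℝ f (x, y + 1, z) e = fderiv ℝ f (x, y, z) e := by
  have h := fderiv_per hf ((0:ℝ), (1:ℝ), (0:ℝ)) (per_of_perY hper) (x, y, z) e
  simpa only [Prod.mk_add_mk, add_zero, zero_add] using h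

end Periodic

noncomputable def I3 (f : V3 → ℝ) : ℝ :=
  ∫ x in Ioo (0:ℝ) 1, ∫ y in Ioo (0:ℝ) 1, ∫ z in Ioo (0:ℝ) 1, f (x, y, z)

section I3sec

variable {f g : V3 → ℝ}

lemma contZslice (hf : Continuous f) (x y : ℝ) : Continuous fun z => f (x, y, z) :=
  hf.comp (by fun_prop)

lemma contYint (hf : Continuous f) (x : ℝ) :
    Continuous fun y => ∫ z in Ioo (0:ℝ) 1, f (x, y, z) :=
  (contParam hf).comp (Continuous.prodMk_right x)

lemma I3_congr (h : ∀ q, f q = g q) : I3 f = I3 g := by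
  rw [show f = g from funext h]

lemma I3_sub (hf : Continuous f) (hg : Continuous g) :
    I3 (fun q => f q - g q) = I3 f - I3 g := by
  unfold I3
  have h1 : ∀ x y : ℝ, (∫ z in Ioo (0:ℝ) 1, (f (x, y, z) - g (x, y, z)))
      = (∫ z in Ioo (0:ℝ) 1, f (x, y, z)) - ∫ z in Ioo (0:ℝ) 1, g (x, y, z) := fun x y =>
    integral_sub (contIntOn (contZslice hf x y)) (contIntOn (contZslice hg x y))
  simp_rw [h1]
  have h2 : ∀ x : ℝ, (∫ y in Ioo (0:ℝ) 1, ((∫ z in Ioo (0:ℝ) 1, f (x, y, z))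
        - ∫ z in Ioo (0:ℝ) 1, g (x, y, z)))
      = (∫ y in Ioo (0:ℝ) 1, ∫ z in Ioo (0:ℝ) 1, f (x, y, z))
        - ∫ y in Ioo (0:ℝ) 1, ∫ z in Ioo (0:ℝ) 1, g (x, y, z) := fun x =>
    integral_sub (contIntOn (contYint hf x)) (contIntOn (contYint hg x))
  simp_rw [h2]
  exact integral_sub (contIntOn (contParam2 hf)) (contIntOn (contParam2 hg))

lemma I3_add (hf : Continuous f) (hg : Continuous g) :
    I3 (fun q => f q + g q) = I3 f + I3 g := by
  unfold I3
  have h1 : ∀ x y : ℝ, (∫ z in Ioo (0:ℝ) 1, (f (x, y, z) + g (x, y, z)))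
      = (∫ z in Ioo (0:ℝ) 1, f (x, y, z)) + ∫ z in Ioo (0:ℝ) 1, g (x, y, z) := fun x y =>
    integral_add (contIntOn (contZslice hf x y)) (contIntOn (contZslice hg x y))
  simp_rw [h1]
  have h2 : ∀ x : ℝ, (∫ y in Ioo (0:ℝ) 1, ((∫ z in Ioo (0:ℝ) 1, f (x, y, z))
        + ∫ z in Ioo (0:ℝ) 1, g (x, y, z)))
      = (∫ y in Ioo (0:ℝ) 1, ∫ z in Ioo (0:ℝ) 1, f (x, y, z))
        + ∫ y in Ioo (0:ℝ) 1, ∫ z in Ioo (0:ℝ) 1, g (x, y, z) := fun x =>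
    integral_add (contIntOn (contYint hf x)) (contIntOn (contYint hg x))
  simp_rw [h2]
  exact integral_add (contIntOn (contParam2 hf)) (contIntOn (contParam2 hg))

lemma I3_const_mul (c : ℝ) : I3 (fun q => c * f q) = c * I3 f := by
  unfold I3
  simp_rw [MeasureTheory.integral_const_mul]

lemma swap2' {F : ℝ → ℝ → ℝ} (hF : Continuous fun p : ℝ × ℝ => F p.1 p.2) :
    (∫ u in Ioo (0:ℝ) 1, ∫ v in Ioo (0:ℝ) 1, F u v)
      = ∫ v in Ioo (0:ℝ) 1, ∫ u in Ioo (0:ℝ) 1, F u v := swap2 hF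

lemma I3_pdZ_zero (hf : ContDiff ℝ (⊤ : ℕ∞) f) (h0 : ∀ x y : ℝ, f (x, y, 0) = 0)
    (h1 : ∀ x y : ℝ, f (x, y, 1) = 0) : I3 (pdZ f) = 0 := by
  unfold I3
  have h : ∀ x y : ℝ, (∫ z in Ioo (0:ℝ) 1, pdZ f (x, y, z)) = 0 := by
    intro x y; rw [intZ hf, h1, h0]; ring
  simp_rw [h]
  simp

lemma I3_pdY_zero (hf : ContDiff ℝ (⊤ : ℕ∞) f) (hper : ∀ x z : ℝ, f (x, 1, z) = f (x, 0, z)) :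
    I3 (pdY f) = 0 := by
  unfold I3
  have h : ∀ x : ℝ, (∫ y in Ioo (0:ℝ) 1, ∫ z in Ioo (0:ℝ) 1, pdY f (x, y, z)) = 0 := by
    intro x
    have hs : (∫ y in Ioo (0:ℝ) 1, ∫ z in Ioo (0:ℝ) 1, pdY f (x, y, z))
        = ∫ z in Ioo (0:ℝ) 1, ∫ y in Ioo (0:ℝ) 1, pdY f (x, y, z) :=
      swap2' (F := fun y z => pdY f (x, y, z))
        ((pdY_contDiff hf).continuous.comp (by fun_prop))
    rw [hs]
    have h2 : ∀ z : ℝ, (∫ y in Ioo (0:ℝ) 1, pdY f (x, y, z)) = 0 := by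
      intro z; rw [intY hf, hper]; ring
    simp_rw [h2]
    simp
  simp_rw [h]
  simp

lemma I3_pdX_zero (hf : ContDiff ℝ (⊤ : ℕ∞) f) (hper : ∀ y z : ℝ, f (1, y, z) = f (0, y, z)) :
    I3 (pdX f) = 0 := by
  unfold I3
  have hcont := (pdX_contDiff hf).continuous
  have hs : (∫ x in Ioo (0:ℝ) 1, ∫ y in Ioo (0:ℝ) 1, ∫ z in Ioo (0:ℝ) 1, pdX f (x, y, z))
      = ∫ y in Ioo (0:ℝ) 1, ∫ x in Ioo (0:ℝ) 1, ∫ z in Ioo (0:ℝ) 1, pdX f (x, y, z) :=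
    swap2' (F := fun x y => ∫ z in Ioo (0:ℝ) 1, pdX f (x, y, z)) (contParam hcont)
  rw [hs]
  have h : ∀ y : ℝ, (∫ x in Ioo (0:ℝ) 1, ∫ z in Ioo (0:ℝ) 1, pdX f (x, y, z)) = 0 := by
    intro y
    have hs2 : (∫ x in Ioo (0:ℝ) 1, ∫ z in Ioo (0:ℝ) 1, pdX f (x, y, z))
        = ∫ z in Ioo (0:ℝ) 1, ∫ x in Ioo (0:ℝ) 1, pdX f (x, y, z) :=
      swap2' (F := fun x z => pdX f (x, y, z)) (hcont.comp (by fun_prop))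
    rw [hs2]
    have h2 : ∀ z : ℝ, (∫ x in Ioo (0:ℝ) 1, pdX f (x, y, z)) = 0 := by
      intro z; rw [intX hf, hper]; ring
    simp_rw [h2]
    simp
  simp_rw [h]
  simp

end I3sec

noncomputable def Pf (w v : V3 → ℝ) : V3 → ℝ := fun p =>
  w p * pdZ w p * pdX w p + 1/2 * ((pdX w p) ^ 2 + (pdY w p) ^ 2 + (pdZ w p) ^ 2) * v p

noncomputable def Qf (w v : V3 → ℝ) : V3 → ℝ := fun p =>
  w p * pdZ w p * pdY w p + 1/2 * ((pdX w p) ^ 2 + (pdY w p) ^ 2 + (pdZ w p) ^ 2) * v p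

noncomputable def Rf (w : V3 → ℝ) : V3 → ℝ := fun p =>
  1/2 * w p * ((pdZ w p) ^ 2 - (pdX w p) ^ 2 - (pdY w p) ^ 2)

section Main

variable {w v1 v2 : V3 → ℝ}

lemma Ef_contDiff (hw : ContDiff ℝ (⊤ : ℕ∞) w) :
    ContDiff ℝ (⊤ : ℕ∞) (fun p => (pdX w p) ^ 2 + (pdY w p) ^ 2 + (pdZ w p) ^ 2) :=
  (((pdX_contDiff hw).pow 2).add ((pdY_contDiff hw).pow 2)).add ((pdZ_contDiff hw).pow 2)

lemma Pf_contDiff (hw : ContDiff ℝ (⊤ : ℕ∞) w) (hv : ContDiff ℝ (⊤ : ℕ∞) v1) :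
    ContDiff ℝ (⊤ : ℕ∞) (Pf w v1) := by
  unfold Pf
  exact ((hw.mul (pdZ_contDiff hw)).mul (pdX_contDiff hw)).add
    ((contDiff_const.mul (Ef_contDiff hw)).mul hv)

lemma Qf_contDiff (hw : ContDiff ℝ (⊤ : ℕ∞) w) (hv : ContDiff ℝ (⊤ : ℕ∞) v2) :
    ContDiff ℝ (⊤ : ℕ∞) (Qf w v2) := by
  unfold Qf
  exact ((hw.mul (pdZ_contDiff hw)).mul (pdY_contDiff hw)).add
    ((contDiff_const.mul (Ef_contDiff hw)).mul hv)

lemma Rf_contDiff (hw : ContDiff ℝ (⊤ : ℕ∞) w) : ContDiff ℝ (⊤ : ℕ∞) (Rf w) := by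
  unfold Rf
  exact (contDiff_const.mul hw).mul
    ((((pdZ_contDiff hw).pow 2).sub ((pdX_contDiff hw).pow 2)).sub ((pdY_contDiff hw).pow 2))

lemma key_pointwise (hw : ContDiff ℝ (⊤ : ℕ∞) w) (hv1 : ContDiff ℝ (⊤ : ℕ∞) v1) (hv2 : ContDiff ℝ (⊤ : ℕ∞) v2)
    (hdiv : ∀ q : V3, pdX v1 q + pdY v2 q + pdZ w q = 0) (q : V3) :
    pdX (Pf w v1) q + pdY (Qf w v2) q + pdZ (Rf w) q
      = w q * pdZ w q * (pdX (pdX w) q + pdY (pdY w) q + pdZ (pdZ w) q)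
        + 1/2 * (pdX (fun p => (pdX w p) ^ 2 + (pdY w p) ^ 2 + (pdZ w p) ^ 2) q * v1 q
          + pdY (fun p => (pdX w p) ^ 2 + (pdY w p) ^ 2 + (pdZ w p) ^ 2) q * v2 q) := by
  have dw : DifferentiableAt ℝ w q := (hw.differentiable (by simp)).differentiableAt
  have da : DifferentiableAt ℝ (pdX w) q :=
    ((pdX_contDiff hw).differentiable (by simp)).differentiableAt
  have db : DifferentiableAt ℝ (pdY w) q :=
    ((pdY_contDiff hw).differentiable (by simp)).differentiableAt
  have dc : DifferentiableAt ℝ (pdZ w) q :=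
    ((pdZ_contDiff hw).differentiable (by simp)).differentiableAt
  have dv1 : DifferentiableAt ℝ v1 q := (hv1.differentiable (by simp)).differentiableAt
  have dv2 : DifferentiableAt ℝ v2 q := (hv2.differentiable (by simp)).differentiableAt
  have dwc : DifferentiableAt ℝ (fun p => w p * pdZ w p) q := dw.mul dc
  have dwca : DifferentiableAt ℝ (fun p => w p * pdZ w p * pdX w p) q := dwc.mul da
  have dwcb : DifferentiableAt ℝ (fun p => w p * pdZ w p * pdY w p) q := dwc.mul db
  have da2 : DifferentiableAt ℝ (fun p => (pdX w p) ^ 2) q := da.pow 2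
  have db2 : DifferentiableAt ℝ (fun p => (pdY w p) ^ 2) q := db.pow 2
  have dc2 : DifferentiableAt ℝ (fun p => (pdZ w p) ^ 2) q := dc.pow 2
  have dE : DifferentiableAt ℝ
      (fun p => (pdX w p) ^ 2 + (pdY w p) ^ 2 + (pdZ w p) ^ 2) q := (da2.add db2).add dc2
  have dcE : DifferentiableAt ℝ
      (fun p => 1/2 * ((pdX w p) ^ 2 + (pdY w p) ^ 2 + (pdZ w p) ^ 2)) q := dE.const_mul _
  have dEv1 : DifferentiableAt ℝ
      (fun p => 1/2 * ((pdX w p) ^ 2 + (pdY w p) ^ 2 + (pdZ w p) ^ 2) * v1 p) q := dcE.mul dv1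
  have dEv2 : DifferentiableAt ℝ
      (fun p => 1/2 * ((pdX w p) ^ 2 + (pdY w p) ^ 2 + (pdZ w p) ^ 2) * v2 p) q := dcE.mul dv2
  have dcw : DifferentiableAt ℝ (fun p => 1/2 * w p) q := dw.const_mul _
  have dsub : DifferentiableAt ℝ
      (fun p => (pdZ w p) ^ 2 - (pdX w p) ^ 2 - (pdY w p) ^ 2) q := (dc2.sub da2).sub db2
  unfold Pf Qf Rf
  rw [pdX_add dwca dEv1, pdX_mul dwc da, pdX_mul dw dc, pdX_mul dcE dv1,
    pdX_const_mul _ dE, pdX_add (show DifferentiableAt ℝ (fun p => pdX w p ^ 2 + pdY w p ^ 2) q from da2.add db2) dc2, pdX_add da2 db2,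
    pdX_sq da, pdX_sq db, pdX_sq dc]
  rw [pdY_add dwcb dEv2, pdY_mul dwc db, pdY_mul dw dc, pdY_mul dcE dv2,
    pdY_const_mul _ dE, pdY_add (show DifferentiableAt ℝ (fun p => pdX w p ^ 2 + pdY w p ^ 2) q from da2.add db2) dc2, pdY_add da2 db2,
    pdY_sq da, pdY_sq db, pdY_sq dc]
  rw [pdZ_mul dcw dsub, pdZ_const_mul _ dw, pdZ_sub (show DifferentiableAt ℝ (fun p => pdZ w p ^ 2 - pdX w p ^ 2) q from dc2.sub da2) db2, pdZ_sub dc2 da2,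
    pdZ_sq dc, pdZ_sq da, pdZ_sq db]
  rw [pdX_pdZ_comm hw q, pdY_pdZ_comm hw q]
  have hd : pdX v1 q = -pdY v2 q - pdZ w q := by linarith [hdiv q]
  rw [hd]
  ring

end Main

/-- Integration-by-parts identity for the vertical momentum equation:
`∫_Ω w w_z (Δ_h w + w_zz) = -½ ∫_Ω ∇_h(|∇_h w|² + w_z²)·v`. -/
theorem vertical_energy_identity (w v1 v2 : ℝ × ℝ × ℝ → ℝ)
    (hw : ContDiff ℝ (⊤ : ℕ∞) w) (hv1 : ContDiff ℝ (⊤ : ℕ∞) v1) (hv2 : ContDiff ℝ (⊤ : ℕ∞) v2)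
    (hpx : ∀ x y z : ℝ, w (x + 1, y, z) = w (x, y, z) ∧
      v1 (x + 1, y, z) = v1 (x, y, z) ∧ v2 (x + 1, y, z) = v2 (x, y, z))
    (hpy : ∀ x y z : ℝ, w (x, y + 1, z) = w (x, y, z) ∧
      v1 (x, y + 1, z) = v1 (x, y, z) ∧ v2 (x, y + 1, z) = v2 (x, y, z))
    (hbc : ∀ x y : ℝ, w (x, y, 0) = 0 ∧ w (x, y, 1) = 0)
    (hdiv : ∀ q : ℝ × ℝ × ℝ, pdX v1 q + pdY v2 q + pdZ w q = 0) :
    (∫ x in Ioo (0:ℝ) 1, ∫ y in Ioo (0:ℝ) 1, ∫ z in Ioo (0:ℝ) 1,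
        w (x, y, z) * pdZ w (x, y, z) *
          (pdX (pdX w) (x, y, z) + pdY (pdY w) (x, y, z) + pdZ (pdZ w) (x, y, z))) =
      -(1/2) * ∫ x in Ioo (0:ℝ) 1, ∫ y in Ioo (0:ℝ) 1, ∫ z in Ioo (0:ℝ) 1,
        (pdX (fun q => (pdX w q) ^ 2 + (pdY w q) ^ 2 + (pdZ w q) ^ 2) (x, y, z) * v1 (x, y, z) +
          pdY (fun q => (pdX w q) ^ 2 + (pdY w q) ^ 2 + (pdZ w q) ^ 2) (x, y, z) *
            v2 (x, y, z)) := by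
  -- periodicity facts
  have hwx : ∀ x y z : ℝ, w (x + 1, y, z) = w (x, y, z) := fun x y z => (hpx x y z).1
  have hv1x : ∀ x y z : ℝ, v1 (x + 1, y, z) = v1 (x, y, z) := fun x y z => (hpx x y z).2.1
  have hwy : ∀ x y z : ℝ, w (x, y + 1, z) = w (x, y, z) := fun x y z => (hpy x y z).1
  have hv2y : ∀ x y z : ℝ, v2 (x, y + 1, z) = v2 (x, y, z) := fun x y z => (hpy x y z).2.2
  have hax : ∀ x y z : ℝ, pdX w (x + 1, y, z) = pdX w (x, y, z) :=
    fun x y z => pd_perX hw hwx _ x y z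
  have hbx : ∀ x y z : ℝ, pdY w (x + 1, y, z) = pdY w (x, y, z) :=
    fun x y z => pd_perX hw hwx _ x y z
  have hcx : ∀ x y z : ℝ, pdZ w (x + 1, y, z) = pdZ w (x, y, z) :=
    fun x y z => pd_perX hw hwx _ x y z
  have hay : ∀ x y z : ℝ, pdX w (x, y + 1, z) = pdX w (x, y, z) :=
    fun x y z => pd_perY hw hwy _ x y z
  have hby : ∀ x y z : ℝ, pdY w (x, y + 1, z) = pdY w (x, y, z) :=
    fun x y z => pd_perY hw hwy _ x y z
  have hcy : ∀ x y z : ℝ, pdZ w (x, y + 1, z) = pdZ w (x, y, z) :=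
    fun x y z => pd_perY hw hwy _ x y z
  have hPper : ∀ y z : ℝ, Pf w v1 (1, y, z) = Pf w v1 (0, y, z) := by
    intro y z
    rw [show ((1:ℝ), y, z) = (((0:ℝ) + 1 : ℝ), y, z) by norm_num]
    unfold Pf
    rw [hwx 0 y z, hv1x 0 y z, hax 0 y z, hbx 0 y z, hcx 0 y z]
  have hQper : ∀ x z : ℝ, Qf w v2 (x, 1, z) = Qf w v2 (x, 0, z) := by
    intro x z
    rw [show (x, (1:ℝ), z) = (x, ((0:ℝ) + 1 : ℝ), z) by norm_num]
    unfold Qf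
    rw [hwy x 0 z, hv2y x 0 z, hay x 0 z, hby x 0 z, hcy x 0 z]
  have hR0 : ∀ x y : ℝ, Rf w (x, y, 0) = 0 := by
    intro x y; unfold Rf; rw [(hbc x y).1]; ring
  have hR1 : ∀ x y : ℝ, Rf w (x, y, 1) = 0 := by
    intro x y; unfold Rf; rw [(hbc x y).2]; ring
  -- continuity facts
  have hPc : Continuous (pdX (Pf w v1)) := (pdX_contDiff (Pf_contDiff hw hv1)).continuous
  have hQc : Continuous (pdY (Qf w v2)) := (pdY_contDiff (Qf_contDiff hw hv2)).continuous
  have hRc : Continuous (pdZ (Rf w)) := (pdZ_contDiff (Rf_contDiff hw)).continuous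
  have hDc : Continuous
      (fun q : V3 => pdX (Pf w v1) q + pdY (Qf w v2) q + pdZ (Rf w) q) :=
    (hPc.add hQc).add hRc
  have hBc : Continuous (fun q : V3 =>
      pdX (fun p => (pdX w p) ^ 2 + (pdY w p) ^ 2 + (pdZ w p) ^ 2) q * v1 q +
        pdY (fun p => (pdX w p) ^ 2 + (pdY w p) ^ 2 + (pdZ w p) ^ 2) q * v2 q) :=
    ((pdX_contDiff (Ef_contDiff hw)).continuous.mul hv1.continuous).add
      ((pdY_contDiff (Ef_contDiff hw)).continuous.mul hv2.continuous)
  have hhalfBc : Continuous (fun q : V3 => 1/2 *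
      (pdX (fun p => (pdX w p) ^ 2 + (pdY w p) ^ 2 + (pdZ w p) ^ 2) q * v1 q +
        pdY (fun p => (pdX w p) ^ 2 + (pdY w p) ^ 2 + (pdZ w p) ^ 2) q * v2 q)) :=
    continuous_const.mul hBc
  -- the divergence integral vanishes
  have hD0 : I3 (fun q : V3 => pdX (Pf w v1) q + pdY (Qf w v2) q + pdZ (Rf w) q) = 0 := by
    rw [I3_add (f := fun q : V3 => pdX (Pf w v1) q + pdY (Qf w v2) q) (g := pdZ (Rf w))
        (hPc.add hQc) hRc,
      I3_add (f := pdX (Pf w v1)) (g := pdY (Qf w v2)) hPc hQc,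
      I3_pdX_zero (Pf_contDiff hw hv1) hPper, I3_pdY_zero (Qf_contDiff hw hv2) hQper,
      I3_pdZ_zero (Rf_contDiff hw) hR0 hR1]
    ring
  -- pointwise rearrangement
  have hkey : ∀ q : V3,
      w q * pdZ w q * (pdX (pdX w) q + pdY (pdY w) q + pdZ (pdZ w) q)
        = (pdX (Pf w v1) q + pdY (Qf w v2) q + pdZ (Rf w) q)
          - 1/2 * (pdX (fun p => (pdX w p) ^ 2 + (pdY w p) ^ 2 + (pdZ w p) ^ 2) q * v1 q +
              pdY (fun p => (pdX w p) ^ 2 + (pdY w p) ^ 2 + (pdZ w p) ^ 2) q * v2 q) := by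
    intro q
    have h := key_pointwise hw hv1 hv2 hdiv q
    linarith
  show I3 (fun q : V3 => w q * pdZ w q *
        (pdX (pdX w) q + pdY (pdY w) q + pdZ (pdZ w) q))
      = -(1/2) * I3 (fun q : V3 =>
          pdX (fun p => (pdX w p) ^ 2 + (pdY w p) ^ 2 + (pdZ w p) ^ 2) q * v1 q +
            pdY (fun p => (pdX w p) ^ 2 + (pdY w p) ^ 2 + (pdZ w p) ^ 2) q * v2 q)
  rw [I3_congr hkey, I3_sub hDc hhalfBc, I3_const_mul, hD0]
  ring
end
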